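/- arXiv:1304.4534 — 3 statements merged into one kernel-verified Lean document; each statement's English description precedes it below -/
import Mathlib

section
/- For any T ∈ [0,∞), any sequence of natural numbers (k(n))_{n≥1} with k(n)/n → T as n → ∞, and every x ∈ ℝ: lim_{n→∞} | V̂^{(n)}_{k(n)}(x) − V^{(n)}_{k(n)}(x) | = 0. -/
open MeasureTheory ProbabilityTheory Filter
open scoped ENNReal

section Setup

variable {Ω : Type*}

/-- `X` has stationary increments (for `s, t ≥ 0`). -/
def StationaryIncrements [MeasurableSpace Ω] (P : Measure Ω) (X : ℝ → Ω → ℝ) : Prop :=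
  ∀ s t : ℝ, 0 ≤ s → 0 ≤ t →
    Measure.map (fun ω => X (t + s) ω - X t ω) P = Measure.map (X s) P

/-- `X` has independent increments: for `0 = t 0 ≤ t 1 ≤ ⋯ ≤ t m` the increments
`X (t (j+1)) − X (t j)` are independent. -/
def IndependentIncrements [MeasurableSpace Ω] (P : Measure Ω) (X : ℝ → Ω → ℝ) : Prop :=
  ∀ (m : ℕ) (t : Fin (m + 1) → ℝ), (∀ i, 0 ≤ t i) → Monotone t → t 0 = 0 →
    iIndepFun
      (fun j : Fin m => fun ω => X (t j.succ) ω - X (t j.castSucc) ω) P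

/-- The paths `t ↦ X t ω` are almost surely right-continuous with left limits on `[0,∞)`. -/
def CadlagPaths [MeasurableSpace Ω] (P : Measure Ω) (X : ℝ → Ω → ℝ) : Prop :=
  ∀ᵐ ω ∂P,
    (∀ t : ℝ, 0 ≤ t → ContinuousWithinAt (fun s => X s ω) (Set.Ici t) t) ∧
      ∀ t : ℝ, 0 < t → ∃ l : ℝ,
        Tendsto (fun s => X s ω) (nhdsWithin t (Set.Iio t)) (nhds l)

/-- `X` is a Lévy process (indexed by `[0,∞)`, extended to `ℝ` for convenience):
measurable marginals, `X 0 = 0` a.s., stationary independent increments and a.s.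
càdlàg paths. -/
def IsLevy [MeasurableSpace Ω] (P : Measure Ω) (X : ℝ → Ω → ℝ) : Prop :=
  (∀ t, Measurable (X t)) ∧ (∀ᵐ ω ∂P, X 0 ω = 0) ∧
    StationaryIncrements P X ∧ IndependentIncrements P X ∧ CadlagPaths P X

/-- `ξ` is an i.i.d. sequence of exponential random variables with rate `ρ`. -/
def IsExpSeq [MeasurableSpace Ω] (P : Measure Ω) (ρ : ℝ) (ξ : ℕ → Ω → ℝ) : Prop :=
  (∀ i, Measurable (ξ i)) ∧
    iIndepFun ξ P ∧
    ∀ i, Measure.map (ξ i) P = expMeasure ρ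

/-- The sequence `ξ` is independent of the process `X`. -/
def IndepOfProcess [MeasurableSpace Ω] (P : Measure Ω) (ξ : ℕ → Ω → ℝ)
    (X : ℝ → Ω → ℝ) : Prop :=
  Indep (⨆ i : ℕ, MeasurableSpace.comap (ξ i) inferInstance)
    (⨆ t : ℝ, MeasurableSpace.comap (X t) inferInstance) P

/-- `T^{(n)}_k = ξ_1 + ⋯ + ξ_k`, the `k`-th grid point. -/
def gridTime (ξ : ℕ → Ω → ℝ) (k : ℕ) (ω : Ω) : ℝ :=
  ∑ i ∈ Finset.range k, ξ i ω

/-- The counting process `N_t = max {k : T_k ≤ t}` associated to the grid. -/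
noncomputable def countProc (ξ : ℕ → Ω → ℝ) (t : ℝ) (ω : Ω) : ℕ :=
  sSup {k : ℕ | gridTime ξ k ω ≤ t}

/-- The natural filtration generated by the process `X` on `[0,∞)`. -/
def natFiltration (X : ℝ → Ω → ℝ) (t : ℝ) : MeasurableSpace Ω :=
  ⨆ s ∈ Set.Icc (0 : ℝ) t, MeasurableSpace.comap (X s) inferInstance

/-- The filtration generated by the pair `(X, N)` on `[0,∞)`. -/
def pairFiltration (X : ℝ → Ω → ℝ) (N : ℝ → Ω → ℕ) (t : ℝ) : MeasurableSpace Ω :=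
  ⨆ s ∈ Set.Icc (0 : ℝ) t,
    (MeasurableSpace.comap (X s) inferInstance ⊔ MeasurableSpace.comap (N s) inferInstance)

/-- `τ` is a stopping time of the family of σ-algebras `𝔽`. -/
def IsStoppingTimeWRT (𝔽 : ℝ → MeasurableSpace Ω) (τ : Ω → ℝ) : Prop :=
  ∀ t : ℝ, MeasurableSet[𝔽 t] {ω | τ ω ≤ t}

/-- The set `𝒯̃^{(n)}` of stopping times of the filtration generated by `(X, N^{(n)})`
taking values on the grid points `{T^{(n)}_0, T^{(n)}_1, …}`. -/
def gridStoppingTimes (X : ℝ → Ω → ℝ) (ξ : ℕ → Ω → ℝ) : Set (Ω → ℝ) :=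
  {τ | IsStoppingTimeWRT (pairFiltration X (countProc ξ)) τ ∧
        ∀ ω, ∃ k : ℕ, τ ω = gridTime ξ k ω}

/-- The set of (nonnegative, finite-valued) stopping times of the filtration generated
by `X`. -/
def stoppingTimes (X : ℝ → Ω → ℝ) : Set (Ω → ℝ) :=
  {τ | (∀ ω, 0 ≤ τ ω) ∧ IsStoppingTimeWRT (natFiltration X) τ}

/-- The adjusted discount factor `D^{(n)}(τ) = ∑_{i≥0} 1_{τ = T^{(n)}_i} e^{−r i/n}`. -/
noncomputable def discount (r : ℝ) (n : ℕ) (ξ : ℕ → Ω → ℝ) (τ : Ω → ℝ) (ω : Ω) : ℝ :=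
  ∑' i : ℕ, Set.indicator {ω' | τ ω' = gridTime ξ i ω'}
      (fun _ => Real.exp (-(r * i / n))) ω

/-- The value function `V^{(n)}_k(x)` of the adjusted (Canadised) problem, with the
adjusted discount factor `D^{(n)}`. -/
noncomputable def V [MeasurableSpace Ω] (P : Measure Ω) (X : ℝ → Ω → ℝ)
    (ξ : ℕ → Ω → ℝ) (f : ℝ → ℝ) (r : ℝ) (n : ℕ) (k : ℕ) (x : ℝ) : ℝ :=
  sSup ((fun τ : Ω → ℝ =>
      ∫ ω, discount r n ξ (fun ω' => min (τ ω') (gridTime ξ k ω')) ω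
          * f (x + X (min (τ ω) (gridTime ξ k ω)) ω) ∂P) '' gridStoppingTimes X ξ)

/-- The value function `V̂^{(n)}_k(x)`, with the genuine discount factor `e^{−rt}`. -/
noncomputable def Vhat [MeasurableSpace Ω] (P : Measure Ω) (X : ℝ → Ω → ℝ)
    (ξ : ℕ → Ω → ℝ) (f : ℝ → ℝ) (r : ℝ) (k : ℕ) (x : ℝ) : ℝ :=
  sSup ((fun τ : Ω → ℝ =>
      ∫ ω, Real.exp (-(r * min (τ ω) (gridTime ξ k ω)))
          * f (x + X (min (τ ω) (gridTime ξ k ω)) ω) ∂P) '' gridStoppingTimes X ξ)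

/-- `v(T,x) = sup_τ E_x[e^{−r(τ∧T)} f(X_{τ∧T})]`, the supremum over all stopping times
of the filtration generated by `X`. -/
noncomputable def valueFun [MeasurableSpace Ω] (P : Measure Ω) (X : ℝ → Ω → ℝ)
    (f : ℝ → ℝ) (r : ℝ) (T : ℝ) (x : ℝ) : ℝ :=
  sSup ((fun τ : Ω → ℝ =>
      ∫ ω, Real.exp (-(r * min (τ ω) T)) * f (x + X (min (τ ω) T) ω) ∂P)
    '' stoppingTimes X)

end Setup

/-!
On the grid, `τ ∧ T_k = T_I` for a random index `I ≤ k`, so the two value functions compare the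
discount factors `e^{-r T_I}` and `e^{-r I / n}`. As `x ↦ e^{-x}` is `1`-Lipschitz on `[0, ∞)`,
these differ by at most `r δ` unless some `T_i`, `i ≤ k`, deviates from its mean `i / n` by more
than `δ`. Hence, with `M` a bound for `|f|`, the two expected payoffs of every stopping time
differ by at most `M (r δ + P(deviation))`, and so do the suprema. The deviation probability
tends to `0`: since the grid is monotone it suffices to control `T_i` at the `O(1 / δ)`
multiples of `m ≈ n δ / 2` below `k`, and Chebyshev's inequality (`Var T_i = i / n²`) bounds
each of these by `O(1 / n)`.
-/

lemma Real.abs_exp_neg_sub_exp_neg_le {a b : ℝ} (ha : 0 ≤ a) (hb : 0 ≤ b) :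
    |exp (-a) - exp (-b)| ≤ |a - b| := by
  wlog hab : a ≤ b generalizing a b
  · rw [abs_sub_comm, abs_sub_comm a]
    exact this hb ha (le_of_not_ge hab)
  have hfactor : exp (-b) = exp (-a) * exp (a - b) := by rw [← exp_add]; ring_nf
  rw [abs_of_nonneg (sub_nonneg.2 (exp_le_exp.2 (neg_le_neg hab))),
    abs_of_nonpos (sub_nonpos.2 hab), hfactor]
  nlinarith [add_one_le_exp (a - b), exp_pos (-a), exp_le_one_iff.2 (neg_nonpos.2 ha),
    exp_le_one_iff.2 (sub_nonpos.2 hab)]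

lemma Nat.sSup_eq_iSup_ite (S : Set ℕ) [DecidablePred (· ∈ S)] :
    sSup S = ⨆ i, if i ∈ S then i else 0 := by
  have hrange : Set.range (fun i => if i ∈ S then i else 0) = insert 0 S := by
    ext j
    constructor
    · rintro ⟨i, rfl⟩
      dsimp only
      split_ifs with h
      exacts [Or.inr h, Or.inl rfl]
    · rintro (rfl | hj)
      · exact ⟨0, by simp⟩
      · exact ⟨j, if_pos hj⟩
  rw [iSup, hrange]
  by_cases hb : BddAbove S
  · rcases S.eq_empty_or_nonempty with rfl | hne
    · simp
    · rw [csSup_insert hb hne, Nat.zero_max]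
  · rw [Nat.sSup_of_not_bddAbove hb, Nat.sSup_of_not_bddAbove (by rwa [bddAbove_insert])]

lemma abs_sub_le_of_monotone {α : Type*} [Preorder α] {a b : α → ℝ} (ha : Monotone a)
    (hb : Monotone b) {i j l : α} (hji : j ≤ i) (hil : i ≤ l) {ε : ℝ}
    (hj : |a j - b j| ≤ ε) (hl : |a l - b l| ≤ ε) : |a i - b i| ≤ ε + (b l - b j) := by
  rw [abs_le] at hj hl ⊢
  constructor <;> linarith [ha hji, ha hil, hb hji, hb hil]

lemma abs_csSup_image_sub_csSup_image_le {α : Type*} {S : Set α} (hS : S.Nonempty)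
    {u v : α → ℝ} {B C : ℝ} (hvB : ∀ a ∈ S, v a ≤ B) (huv : ∀ a ∈ S, |u a - v a| ≤ C) :
    |sSup (u '' S) - sSup (v '' S)| ≤ C := by
  have hv : BddAbove (v '' S) := ⟨B, Set.forall_mem_image.2 hvB⟩
  have hu : BddAbove (u '' S) := ⟨B + C, Set.forall_mem_image.2 fun a ha => by
    linarith [hvB a ha, (abs_le.1 (huv a ha)).2]⟩
  rw [abs_sub_le_iff]
  constructor
  · refine sub_le_iff_le_add.2 (csSup_le (hS.image u) (Set.forall_mem_image.2 fun a ha => ?_))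
    linarith [le_csSup hv (Set.mem_image_of_mem v ha), (abs_le.1 (huv a ha)).2]
  · refine sub_le_iff_le_add.2 (csSup_le (hS.image v) (Set.forall_mem_image.2 fun a ha => ?_))
    linarith [le_csSup hu (Set.mem_image_of_mem u ha), (abs_le.1 (huv a ha)).1]

lemma tendsto_nhds_zero_of_forall_le_mul_add {a : ℕ → ℝ} {b : ℝ → ℕ → ℝ} {c : ℝ}
    (ha : ∀ n, 0 ≤ a n) (hb : ∀ δ > 0, Tendsto (b δ) atTop (nhds 0))
    (hab : ∀ δ > 0, ∀ᶠ n in atTop, a n ≤ c * δ + b δ n) : Tendsto a atTop (nhds 0) := by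
  refine tendsto_order.2 ⟨fun ε hε => Eventually.of_forall fun n => hε.trans_le (ha n),
    fun ε hε => ?_⟩
  set δ := ε / (2 * (|c| + 1))
  have hδ : 0 < δ := by positivity
  have hcδ : c * δ < ε / 2 := by
    calc c * δ ≤ |c| * δ := mul_le_mul_of_nonneg_right (le_abs_self c) hδ.le
      _ < (|c| + 1) * δ := by linarith
      _ = ε / 2 := by simp only [δ]; field_simp
  filter_upwards [hab δ hδ, (hb δ hδ).eventually (gt_mem_nhds (half_pos hε))] with n h hbn
  linarith

section ExpMeasure

open Real Set

variable {ρ : ℝ}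

lemma integral_pow_expMeasure (hρ : 0 < ρ) (p : ℕ) :
    ∫ x, x ^ p ∂expMeasure ρ = p.factorial / ρ ^ p := by
  have hdens : ∀ x, (gammaPDFReal 1 ρ x).toNNReal • x ^ p
      = indicator (Ici 0) (fun x => ρ * (x ^ ((p + 1 : ℕ) - 1 : ℝ) * exp (-(ρ * x)))) x := by
    intro x
    rw [NNReal.smul_def, Real.coe_toNNReal _ (gammaPDFReal_nonneg zero_lt_one hρ x)]
    by_cases hx : 0 ≤ x
    · simp only [gammaPDFReal, hx, ↓reduceIte, rpow_one, Gamma_one, div_one, sub_self, rpow_zero,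
        smul_eq_mul, Nat.cast_add_one, add_sub_cancel_right, rpow_natCast, mem_Ici,
        indicator_of_mem]
      ring
    · simp [gammaPDFReal, hx]
  rw [show expMeasure ρ = volume.withDensity fun x => ((gammaPDFReal 1 ρ x).toNNReal : ℝ≥0∞)
      from rfl, integral_withDensity_eq_integral_smul (measurable_gammaPDFReal 1 ρ).real_toNNReal]
  simp_rw [hdens]
  rw [integral_indicator measurableSet_Ici, integral_Ici_eq_integral_Ioi, integral_const_mul,
    integral_rpow_mul_exp_neg_mul_Ioi (by positivity) hρ, Real.rpow_natCast,
    Nat.cast_add_one, Real.Gamma_nat_eq_factorial, one_div, inv_pow]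
  field_simp
  ring

lemma integrable_pow_expMeasure (hρ : 0 < ρ) (p : ℕ) :
    Integrable (fun x => x ^ p) (expMeasure ρ) :=
  .of_integral_ne_zero (by rw [integral_pow_expMeasure hρ]; positivity)

lemma integral_id_expMeasure (hρ : 0 < ρ) : ∫ x, x ∂expMeasure ρ = ρ⁻¹ := by
  simpa using integral_pow_expMeasure hρ 1

lemma memLp_id_expMeasure (hρ : 0 < ρ) : MemLp id 2 (expMeasure ρ) :=
  (memLp_two_iff_integrable_sq aestronglyMeasurable_id).2 (integrable_pow_expMeasure hρ 2)

lemma variance_id_expMeasure (hρ : 0 < ρ) : Var[id; expMeasure ρ] = ρ⁻¹ ^ 2 := by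
  have := isProbabilityMeasure_expMeasure hρ
  rw [variance_eq_sub (memLp_id_expMeasure hρ)]
  simp only [id, Pi.pow_apply]
  rw [integral_pow_expMeasure hρ 2, integral_id_expMeasure hρ]
  field_simp
  norm_num [Nat.factorial]

end ExpMeasure

section Grid

variable {Ω : Type*} {ξ : ℕ → Ω → ℝ} {ω : Ω}

lemma gridTime_eq_sum (ξ : ℕ → Ω → ℝ) (j : ℕ) :
    gridTime ξ j = ∑ i ∈ Finset.range j, ξ i := by
  ext ω; simp [gridTime]

lemma gridTime_strictMono (h : ∀ i, 0 < ξ i ω) : StrictMono fun j => gridTime ξ j ω :=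
  strictMono_nat_of_lt_succ fun j => by simp [gridTime, Finset.sum_range_succ, h j]

lemma gridTime_nonneg (h : ∀ i, 0 < ξ i ω) (j : ℕ) : 0 ≤ gridTime ξ j ω :=
  Finset.sum_nonneg fun i _ => (h i).le

lemma zero_mem_gridStoppingTimes (X : ℝ → Ω → ℝ) (ξ : ℕ → Ω → ℝ) :
    0 ∈ gridStoppingTimes X ξ :=
  ⟨fun t => MeasurableSet.const (0 ≤ t), fun _ => ⟨0, by simp [gridTime]⟩⟩

lemma exists_min_gridTime_eq {τ : Ω → ℝ} (hω : ∀ i, 0 < ξ i ω)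
    (hτ : ∃ j, τ ω = gridTime ξ j ω) (k : ℕ) :
    ∃ I ≤ k, min (τ ω) (gridTime ξ k ω) = gridTime ξ I ω := by
  obtain ⟨j, hj⟩ := hτ
  exact ⟨min j k, min_le_right _ _, by rw [hj, (gridTime_strictMono hω).monotone.map_min]⟩

lemma discount_eq_of_eq_gridTime {r : ℝ} {n : ℕ} (hω : ∀ i, 0 < ξ i ω) {σ : Ω → ℝ} {I : ℕ}
    (hσ : σ ω = gridTime ξ I ω) : discount r n ξ σ ω = Real.exp (-(r * I / n)) := by
  rw [discount, tsum_eq_single I]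
  · exact Set.indicator_of_mem (s := {ω' | σ ω' = gridTime ξ I ω'}) hσ _
  · intro i hi
    exact Set.indicator_of_notMem
      (fun h => hi ((gridTime_strictMono hω).injective (h.symm.trans hσ))) _

def gridDeviationEvent (ξ : ℕ → Ω → ℝ) (n k : ℕ) (δ : ℝ) : Set Ω :=
  {ω | ∃ i ≤ k, δ < |gridTime ξ i ω - i / n|}

lemma exists_le_abs_sub_div_of_lt_abs_sub_div {a : ℕ → ℝ} (ha : Monotone a) {n m k i : ℕ}
    (hm : 0 < m) {δ : ℝ} (hmn : (m : ℝ) / n ≤ δ / 2) (hik : i ≤ k)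
    (hi : δ < |a i - i / n|) :
    ∃ l ≤ k / m + 1, δ / 2 ≤ |a (m * l) - ↑(m * l) / n| := by
  by_contra! hcoarse
  have hb : Monotone fun j : ℕ => (j : ℝ) / n := fun _ _ h =>
    div_le_div_of_nonneg_right (by exact_mod_cast h) n.cast_nonneg
  have hq : i / m ≤ k / m := Nat.div_le_div_right hik
  have hsandwich := abs_sub_le_of_monotone ha hb (Nat.mul_div_le i m)
    (Nat.lt_mul_div_succ i hm).le (hcoarse _ (by omega)).le (hcoarse _ (by omega)).le
  have hgap : (↑(m * (i / m + 1)) : ℝ) / n - ↑(m * (i / m)) / n = m / n := by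
    push_cast; ring
  linarith

lemma abs_exp_sub_discount_le {r : ℝ} {n k : ℕ} (hω : ∀ i, 0 < ξ i ω) (hr : 0 ≤ r) {δ : ℝ}
    (hδ : 0 ≤ δ) {σ : Ω → ℝ} {I : ℕ} (hIk : I ≤ k) (hσ : σ ω = gridTime ξ I ω) :
    |Real.exp (-(r * σ ω)) - discount r n ξ σ ω|
      ≤ r * δ + (gridDeviationEvent ξ n k δ).indicator 1 ω := by
  have hT := mul_nonneg hr (gridTime_nonneg hω I)
  rw [discount_eq_of_eq_gridTime hω hσ, hσ]
  by_cases hE : ω ∈ gridDeviationEvent ξ n k δ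
  · rw [Set.indicator_of_mem hE, Pi.one_apply, abs_le]
    have h₁ := Real.exp_le_one_iff.2 (neg_nonpos.2 hT)
    have h₂ := Real.exp_le_one_iff.2 (neg_nonpos.2 (by positivity : 0 ≤ r * I / n))
    constructor <;> nlinarith [Real.exp_pos (-(r * gridTime ξ I ω)),
      Real.exp_pos (-(r * I / n)), mul_nonneg hr hδ]
  · have hdev : |gridTime ξ I ω - I / n| ≤ δ := not_lt.1 fun h => hE ⟨I, hIk, h⟩
    rw [Set.indicator_of_notMem hE, add_zero]
    calc |Real.exp (-(r * gridTime ξ I ω)) - Real.exp (-(r * I / n))|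
        ≤ |r * gridTime ξ I ω - r * I / n| :=
          Real.abs_exp_neg_sub_exp_neg_le hT (by positivity)
      _ = r * |gridTime ξ I ω - I / n| := by
          rw [mul_div_assoc, ← mul_sub, abs_mul, abs_of_nonneg hr]
      _ ≤ r * δ := mul_le_mul_of_nonneg_left hdev hr

end Grid

section Measurability

variable {Ω : Type*} [MeasurableSpace Ω] {ξ : ℕ → Ω → ℝ}

lemma measurable_gridTime (hξ : ∀ i, Measurable (ξ i)) (j : ℕ) :
    Measurable (gridTime ξ j) :=
  Finset.measurable_sum _ fun i _ => hξ i

lemma measurable_countProc (hξ : ∀ i, Measurable (ξ i)) (t : ℝ) :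
    Measurable (countProc ξ t) := by
  classical
  have hsup : countProc ξ t = fun ω => ⨆ i, if gridTime ξ i ω ≤ t then i else 0 := by
    ext ω
    exact Nat.sSup_eq_iSup_ite _
  rw [hsup]
  exact Measurable.iSup fun i => Measurable.ite
    (measurableSet_le (measurable_gridTime hξ i) measurable_const) measurable_const measurable_const

lemma pairFiltration_le {X : ℝ → Ω → ℝ} (hX : ∀ t, Measurable (X t)) {ξ : ℕ → Ω → ℝ}
    (hξ : ∀ i, Measurable (ξ i)) (t : ℝ) : pairFiltration X (countProc ξ) t ≤ ‹_› :=
  iSup₂_le fun s _ => sup_le (hX s).comap_le (measurable_countProc hξ s).comap_le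

lemma measurable_of_mem_gridStoppingTimes {X : ℝ → Ω → ℝ} (hX : ∀ t, Measurable (X t))
    (hξ : ∀ i, Measurable (ξ i)) {τ : Ω → ℝ}
    (hτ : τ ∈ gridStoppingTimes X ξ) : Measurable τ :=
  measurable_of_Iic fun t => pairFiltration_le hX hξ t _ (hτ.1 t)

lemma measurable_discount {r : ℝ} {n : ℕ} (hξ : ∀ i, Measurable (ξ i)) {τ : Ω → ℝ}
    (hτ : Measurable τ) : Measurable (discount r n ξ τ) :=
  Measurable.tsum fun i =>
    measurable_const.indicator (measurableSet_eq_fun hτ (measurable_gridTime hξ i))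

lemma measurableSet_gridDeviationEvent (hξ : ∀ i, Measurable (ξ i)) (n k : ℕ) (δ : ℝ) :
    MeasurableSet (gridDeviationEvent ξ n k δ) := by
  have hunion : gridDeviationEvent ξ n k δ
      = ⋃ i, ⋃ (_ : i ≤ k), {ω | δ < |gridTime ξ i ω - i / n|} := by
    ext ω; simp [gridDeviationEvent]
  rw [hunion]
  exact MeasurableSet.iUnion fun i => MeasurableSet.iUnion fun _ =>
    measurableSet_lt measurable_const (((measurable_gridTime hξ i).sub_const _).abs)

end Measurability

namespace IsExpSeq

variable {Ω : Type*} [MeasurableSpace Ω] {P : Measure Ω} {ρ : ℝ} {ξ : ℕ → Ω → ℝ}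

lemma memLp (hξ : IsExpSeq P ρ ξ) (hρ : 0 < ρ) (i : ℕ) : MemLp (ξ i) 2 P :=
  (memLp_map_measure_iff aestronglyMeasurable_id (hξ.1 i).aemeasurable).1
    (hξ.2.2 i ▸ memLp_id_expMeasure hρ)

lemma integral_eq (hξ : IsExpSeq P ρ ξ) (hρ : 0 < ρ) (i : ℕ) : ∫ ω, ξ i ω ∂P = ρ⁻¹ := by
  rw [← integral_id_expMeasure hρ, ← hξ.2.2 i]
  exact (integral_map (hξ.1 i).aemeasurable aestronglyMeasurable_id).symm

lemma variance_eq (hξ : IsExpSeq P ρ ξ) (hρ : 0 < ρ) (i : ℕ) : Var[ξ i; P] = ρ⁻¹ ^ 2 := by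
  rw [← variance_id_expMeasure hρ, ← hξ.2.2 i, variance_id_map (hξ.1 i).aemeasurable]

lemma ae_pos (hξ : IsExpSeq P ρ ξ) (hρ : 0 < ρ) : ∀ᵐ ω ∂P, ∀ i, 0 < ξ i ω := by
  refine ae_all_iff.2 fun i => ?_
  have hnull : expMeasure ρ (Set.Iic 0) = 0 := by
    have := isProbabilityMeasure_expMeasure hρ
    rw [← ofReal_cdf, cdf_expMeasure_eq hρ]
    simp
  rw [← hξ.2.2 i, Measure.map_apply (hξ.1 i) measurableSet_Iic] at hnull
  filter_upwards [measure_eq_zero_iff_ae_notMem.1 hnull] with ω hω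
  simpa using hω

lemma integral_gridTime [IsFiniteMeasure P] (hξ : IsExpSeq P ρ ξ) (hρ : 0 < ρ) (j : ℕ) :
    ∫ ω, gridTime ξ j ω ∂P = j / ρ := by
  simp only [gridTime]
  rw [integral_finsetSum _ fun i _ => (hξ.memLp hρ i).integrable one_le_two]
  simp [hξ.integral_eq hρ, div_eq_mul_inv]

lemma variance_gridTime [IsFiniteMeasure P] (hξ : IsExpSeq P ρ ξ) (hρ : 0 < ρ) (j : ℕ) :
    Var[gridTime ξ j; P] = j / ρ ^ 2 := by
  rw [gridTime_eq_sum, IndepFun.variance_sum (fun i _ => hξ.memLp hρ i)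
    fun a _ b _ hab => hξ.2.1.indepFun hab]
  simp [hξ.variance_eq hρ, div_eq_mul_inv]

lemma measure_le_abs_gridTime_sub [IsFiniteMeasure P] (hξ : IsExpSeq P ρ ξ) (hρ : 0 < ρ)
    (j : ℕ) {c : ℝ} (hc : 0 < c) :
    P {ω | c ≤ |gridTime ξ j ω - j / ρ|} ≤ ENNReal.ofReal (j / ρ ^ 2 / c ^ 2) := by
  have hmem : MemLp (gridTime ξ j) 2 P := by
    rw [gridTime_eq_sum]
    exact memLp_finsetSum' _ fun i _ => hξ.memLp hρ i
  simpa [hξ.integral_gridTime hρ, hξ.variance_gridTime hρ] using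
    meas_ge_le_variance_div_sq hmem hc

end IsExpSeq

section Deviation

variable {Ω : Type*} [MeasurableSpace Ω] {P : Measure Ω}

lemma measureReal_gridDeviationEvent_le [IsFiniteMeasure P] {ξ : ℕ → Ω → ℝ} {n : ℕ}
    (hn : 0 < n) (hξ : IsExpSeq P n ξ) {m : ℕ} (hm : 0 < m) {δ : ℝ} (hδ : 0 < δ)
    (hmn : (m : ℝ) / n ≤ δ / 2) (k : ℕ) :
    P.real (gridDeviationEvent ξ n k δ)
      ≤ (k / m + 2 : ℕ) * ((k + m) / n ^ 2 / (δ / 2) ^ 2) := by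
  have hn' : (0 : ℝ) < n := by exact_mod_cast hn
  have hcover : gridDeviationEvent ξ n k δ ≤ᵐ[P]
      ⋃ l ∈ Finset.range (k / m + 2), {ω | δ / 2 ≤ |gridTime ξ (m * l) ω - ↑(m * l) / n|} := by
    filter_upwards [hξ.ae_pos hn'] with ω hω ⟨i, hik, hi⟩
    obtain ⟨l, hl, hdev⟩ :=
      exists_le_abs_sub_div_of_lt_abs_sub_div (gridTime_strictMono hω).monotone hm hmn hik hi
    exact Set.mem_biUnion (Finset.mem_range.2 (by omega)) hdev
  have hterm : ∀ l ∈ Finset.range (k / m + 2),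
      P {ω | δ / 2 ≤ |gridTime ξ (m * l) ω - ↑(m * l) / n|}
        ≤ ENNReal.ofReal ((k + m) / n ^ 2 / (δ / 2) ^ 2) := by
    intro l hl
    refine (hξ.measure_le_abs_gridTime_sub hn' _ (by positivity)).trans
      (ENNReal.ofReal_le_ofReal ?_)
    have hml : m * l ≤ k + m := by
      have := Finset.mem_range.1 hl
      nlinarith [Nat.div_mul_le_self k m]
    gcongr
    exact_mod_cast hml
  refine ENNReal.toReal_le_of_le_ofReal (by positivity) ?_
  calc P (gridDeviationEvent ξ n k δ)
      ≤ ∑ l ∈ Finset.range (k / m + 2),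
          P {ω | δ / 2 ≤ |gridTime ξ (m * l) ω - ↑(m * l) / n|} :=
        (measure_mono_ae hcover).trans (measure_biUnion_finset_le _ _)
    _ ≤ ∑ l ∈ Finset.range (k / m + 2), ENNReal.ofReal ((k + m) / n ^ 2 / (δ / 2) ^ 2) :=
        Finset.sum_le_sum hterm
    _ = _ := by
      rw [Finset.sum_const, Finset.card_range, nsmul_eq_mul, ENNReal.ofReal_mul (by positivity),
        ENNReal.ofReal_natCast]

lemma tendsto_measureReal_gridDeviationEvent [IsFiniteMeasure P] {ξ : ℕ → ℕ → Ω → ℝ}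
    (hξ : ∀ᶠ n : ℕ in atTop, IsExpSeq P n (ξ n)) {k : ℕ → ℕ} {K : ℝ}
    (hk : ∀ᶠ n : ℕ in atTop, (k n : ℝ) / n ≤ K) {δ : ℝ} (hδ : 0 < δ) :
    Tendsto (fun n => P.real (gridDeviationEvent (ξ n) n (k n) δ)) atTop (nhds 0) := by
  set C := (4 * K / δ + 2) * ((K + δ / 2) / (δ / 2) ^ 2) with hC
  refine squeeze_zero' (Eventually.of_forall fun _ => measureReal_nonneg)
    ?_ (tendsto_const_div_atTop_nhds_zero_nat C)
  obtain ⟨N, hN⟩ := exists_nat_ge (4 / δ)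
  filter_upwards [hξ, hk, eventually_ge_atTop (max N 1)] with n hξn hkn hn
  have hn' : (1 : ℝ) ≤ n := by exact_mod_cast le_of_max_le_right hn
  have hnδ : 4 ≤ n * δ := by
    have : (4 : ℝ) / δ ≤ n := hN.trans (by exact_mod_cast le_of_max_le_left hn)
    rwa [div_le_iff₀ hδ] at this
  -- the coarse grid spacing: `m / n ≤ δ / 2`, while `k / m = O(K / δ)` stays bounded
  set m := ⌊n * δ / 2⌋₊
  have hm_le : (m : ℝ) ≤ n * δ / 2 := Nat.floor_le (by positivity)
  have hm_ge : n * δ / 4 ≤ m := by linarith [Nat.sub_one_lt_floor (n * δ / 2)]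
  have hm : 0 < m := by exact_mod_cast (show (0 : ℝ) < m by linarith)
  have hK : (k n : ℝ) ≤ K * n := (div_le_iff₀ (by linarith)).1 hkn
  have hK0 : 0 ≤ K := (div_nonneg (k n).cast_nonneg n.cast_nonneg).trans hkn
  have hq : ((k n / m + 2 : ℕ) : ℝ) ≤ 4 * K / δ + 2 := by
    have : (↑(k n / m) : ℝ) ≤ 4 * K / δ :=
      Nat.cast_div_le.trans <| (div_le_div_iff₀ (by positivity) hδ).2 (by nlinarith)
    push_cast; linarith
  refine (measureReal_gridDeviationEvent_le (by omega) hξn hm hδ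
    ((div_le_iff₀ (by positivity)).2 (by linarith)) (k n)).trans ?_
  calc ((k n / m + 2 : ℕ) : ℝ) * ((k n + m) / n ^ 2 / (δ / 2) ^ 2)
      ≤ (4 * K / δ + 2) * ((K * n + n * δ / 2) / n ^ 2 / (δ / 2) ^ 2) := by gcongr
    _ = C / n := by rw [hC]; field_simp

end Deviation

section Integrals

variable {Ω : Type*} [MeasurableSpace Ω] {P : Measure Ω} {a b F : Ω → ℝ} {M : ℝ}

lemma abs_integral_mul_le [IsProbabilityMeasure P] (ha : ∀ᵐ ω ∂P, |a ω| ≤ 1)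
    (hF : ∀ᵐ ω ∂P, |F ω| ≤ M) : |∫ ω, a ω * F ω ∂P| ≤ M := by
  simpa using norm_integral_le_of_norm_le_const (μ := P) (f := fun ω => a ω * F ω)
    (by filter_upwards [ha, hF] with ω haω hFω
        simpa [abs_mul] using mul_le_mul haω hFω (abs_nonneg _) zero_le_one)

/-- The two integrals may be junk (`0`), which is why `a` and `b` must be nonvanishing: then
`a * F` and `b * F` are both integrable or both not, according as `F` is measurable. -/
lemma abs_integral_mul_sub_integral_mul_le [IsFiniteMeasure P] {g : Ω → ℝ}
    (ha : AEStronglyMeasurable a P) (hb : AEStronglyMeasurable b P)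
    (ha0 : ∀ᵐ ω ∂P, a ω ≠ 0) (hb0 : ∀ᵐ ω ∂P, b ω ≠ 0)
    (ha1 : ∀ᵐ ω ∂P, |a ω| ≤ 1) (hb1 : ∀ᵐ ω ∂P, |b ω| ≤ 1) (hF : ∀ᵐ ω ∂P, |F ω| ≤ M)
    (hg : Integrable g P) (hab : ∀ᵐ ω ∂P, |a ω - b ω| ≤ g ω) :
    |∫ ω, a ω * F ω ∂P - ∫ ω, b ω * F ω ∂P| ≤ M * ∫ ω, g ω ∂P := by
  have hpt : ∀ᵐ ω ∂P, |a ω * F ω - b ω * F ω| ≤ M * g ω := by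
    filter_upwards [hF, hab] with ω hFω habω
    rw [← sub_mul, abs_mul, mul_comm]
    exact mul_le_mul hFω habω (abs_nonneg _) ((abs_nonneg _).trans hFω)
  rw [← integral_const_mul]
  by_cases hFm : AEStronglyMeasurable F P
  · have hint : ∀ c : Ω → ℝ, AEStronglyMeasurable c P → (∀ᵐ ω ∂P, |c ω| ≤ 1) →
        Integrable (fun ω => c ω * F ω) P := fun c hc hc1 =>
      (integrable_const M).mono' (hc.mul hFm) (by
        filter_upwards [hc1, hF] with ω hcω hFω
        simpa [abs_mul] using mul_le_mul hcω hFω (abs_nonneg _) zero_le_one)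
    rw [← integral_sub (hint a ha ha1) (hint b hb hb1)]
    simpa only [Real.norm_eq_abs] using
      norm_integral_le_of_norm_le (f := fun ω => a ω * F ω - b ω * F ω) (hg.const_mul M) hpt
  · have hnot : ∀ c : Ω → ℝ, AEStronglyMeasurable c P → (∀ᵐ ω ∂P, c ω ≠ 0) →
        ¬Integrable (fun ω => c ω * F ω) P := fun c hc hc0 hcF =>
      hFm ((aestronglyMeasurable_smul_iff₀ hc hc0).1 hcF.aestronglyMeasurable)
    rw [integral_undef (hnot a ha ha0), integral_undef (hnot b hb hb0), sub_zero, abs_zero]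
    exact integral_nonneg_of_ae (hpt.mono fun ω h => (abs_nonneg _).trans h)

end Integrals

section GridStoppingTimes

variable {Ω : Type*} [MeasurableSpace Ω] {P : Measure Ω} {X : ℝ → Ω → ℝ} {ξ : ℕ → Ω → ℝ}
  {τ : Ω → ℝ} {n : ℕ} {r : ℝ}

lemma ae_discount_min_gridTime_mem_Ioc (hn : 0 < n) (hξ : IsExpSeq P n ξ) (hr : 0 ≤ r)
    (hτ : τ ∈ gridStoppingTimes X ξ) (k : ℕ) :
    ∀ᵐ ω ∂P, discount r n ξ (fun ω' => min (τ ω') (gridTime ξ k ω')) ω ∈ Set.Ioc 0 1 := by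
  filter_upwards [hξ.ae_pos (by exact_mod_cast hn)] with ω hω
  obtain ⟨I, -, hI⟩ := exists_min_gridTime_eq hω (hτ.2 ω) k
  rw [discount_eq_of_eq_gridTime hω hI]
  exact ⟨Real.exp_pos _, Real.exp_le_one_iff.2 (neg_nonpos.2 (by positivity))⟩

lemma abs_integral_exp_sub_integral_discount_le [IsProbabilityMeasure P]
    (hX : ∀ t, Measurable (X t)) (hn : 0 < n) (hξ : IsExpSeq P n ξ) {f : ℝ → ℝ} {M : ℝ}
    (hf : ∀ y, |f y| ≤ M) (hr : 0 ≤ r) (x : ℝ) (k : ℕ) {δ : ℝ} (hδ : 0 ≤ δ)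
    (hτ : τ ∈ gridStoppingTimes X ξ) :
    |∫ ω, Real.exp (-(r * min (τ ω) (gridTime ξ k ω)))
          * f (x + X (min (τ ω) (gridTime ξ k ω)) ω) ∂P
      - ∫ ω, discount r n ξ (fun ω' => min (τ ω') (gridTime ξ k ω')) ω
          * f (x + X (min (τ ω) (gridTime ξ k ω)) ω) ∂P|
      ≤ M * (r * δ + P.real (gridDeviationEvent ξ n k δ)) := by
  set σ : Ω → ℝ := fun ω => min (τ ω) (gridTime ξ k ω)
  have hσ : Measurable σ :=
    (measurable_of_mem_gridStoppingTimes hX hξ.1 hτ).min (measurable_gridTime hξ.1 k)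
  have hgood : ∀ᵐ ω ∂P, (∀ i, 0 < ξ i ω) ∧ ∃ I ≤ k, σ ω = gridTime ξ I ω :=
    (hξ.ae_pos (by exact_mod_cast hn)).mono fun ω hω =>
      ⟨hω, exists_min_gridTime_eq hω (hτ.2 ω) k⟩
  have hD := ae_discount_min_gridTime_mem_Ioc hn hξ hr hτ k
  have hE := measurableSet_gridDeviationEvent hξ.1 n k δ
  have hcompare := abs_integral_mul_sub_integral_mul_le
    (a := fun ω => Real.exp (-(r * σ ω))) (b := discount r n ξ σ)
    (F := fun ω => f (x + X (σ ω) ω)) (M := M)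
    (g := fun ω => r * δ + (gridDeviationEvent ξ n k δ).indicator 1 ω)
    (hσ.const_mul r).neg.exp.aestronglyMeasurable
    (measurable_discount hξ.1 hσ).aestronglyMeasurable
    (ae_of_all _ fun ω => (Real.exp_pos _).ne') (hD.mono fun ω h => h.1.ne')
    (hgood.mono fun ω ⟨hω, I, _, hI⟩ => by
      rw [Real.abs_exp, Real.exp_le_one_iff, neg_nonpos, hI]
      exact mul_nonneg hr (gridTime_nonneg hω I))
    (hD.mono fun ω h => abs_le.2 ⟨by linarith [h.1], h.2⟩) (ae_of_all _ fun ω => hf _)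
    ((integrable_const _).add ((integrable_const 1).indicator hE))
    (hgood.mono fun ω ⟨hω, I, hIk, hI⟩ => abs_exp_sub_discount_le hω hr hδ hIk hI)
  rwa [integral_add (integrable_const _) ((integrable_const 1).indicator hE), integral_const,
    integral_indicator_one hE, probReal_univ, smul_eq_mul, one_mul] at hcompare

lemma abs_integral_discount_mul_le [IsProbabilityMeasure P] (hn : 0 < n)
    (hξ : IsExpSeq P n ξ) {f : ℝ → ℝ} {M : ℝ} (hf : ∀ y, |f y| ≤ M) (hr : 0 ≤ r) (x : ℝ)
    (k : ℕ) (hτ : τ ∈ gridStoppingTimes X ξ) :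
    |∫ ω, discount r n ξ (fun ω' => min (τ ω') (gridTime ξ k ω')) ω
        * f (x + X (min (τ ω) (gridTime ξ k ω)) ω) ∂P| ≤ M :=
  abs_integral_mul_le ((ae_discount_min_gridTime_mem_Ioc hn hξ hr hτ k).mono fun ω h =>
    abs_le.2 ⟨by linarith [h.1], h.2⟩) (ae_of_all _ fun ω => hf _)

end GridStoppingTimes

theorem statement6_general {Ω : Type*} [MeasurableSpace Ω] (P : Measure Ω) [IsProbabilityMeasure P]
    (X : ℝ → Ω → ℝ) (hX : IsLevy P X)
    (f : ℝ → ℝ) (hfb : ∃ M : ℝ, ∀ x, |f x| ≤ M)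
    (r : ℝ) (hr : 0 ≤ r)
    (ξ : ℕ → ℕ → Ω → ℝ)
    (hξ : ∀ n : ℕ, 1 ≤ n → IsExpSeq P (n : ℝ) (ξ n))
    (T : ℝ) (k : ℕ → ℕ)
    (hk : Tendsto (fun n : ℕ => (k n : ℝ) / n) atTop (nhds T)) :
    ∀ x : ℝ,
      Tendsto (fun n : ℕ => |Vhat P X (ξ n) f r (k n) x - V P X (ξ n) f r n (k n) x|)
        atTop (nhds 0) := by
  obtain ⟨M, hM⟩ := hfb
  intro x
  have hdev : ∀ δ > 0, Tendsto (fun n => M * P.real (gridDeviationEvent (ξ n) n (k n) δ))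
      atTop (nhds 0) := fun δ hδ => by
    simpa using (tendsto_measureReal_gridDeviationEvent (eventually_atTop.2 ⟨1, hξ⟩)
      (hk.eventually (eventually_le_nhds (lt_add_one T))) hδ).const_mul M
  refine tendsto_nhds_zero_of_forall_le_mul_add (c := M * r) (fun n => abs_nonneg _) hdev
    fun δ hδ => ?_
  filter_upwards [eventually_ge_atTop 1] with n hn
  calc |Vhat P X (ξ n) f r (k n) x - V P X (ξ n) f r n (k n) x|
      ≤ M * (r * δ + P.real (gridDeviationEvent (ξ n) n (k n) δ)) :=
        abs_csSup_image_sub_csSup_image_le ⟨0, zero_mem_gridStoppingTimes X (ξ n)⟩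
          (fun τ hτ => (abs_le.1 (abs_integral_discount_mul_le hn (hξ n hn) hM hr x (k n) hτ)).2)
          fun τ hτ => abs_integral_exp_sub_integral_discount_le hX.1 hn (hξ n hn) hM hr x
            (k n) hδ.le hτ
    _ = M * r * δ + M * P.real (gridDeviationEvent (ξ n) n (k n) δ) := by ring

/-- for `T ∈ [0,∞)` and naturals `k(n)` with `k(n)/n → T`, for every `x`:
`|V̂^{(n)}_{k(n)}(x) − V^{(n)}_{k(n)}(x)| → 0` as `n → ∞`. -/
theorem statement6 {Ω : Type*} [MeasurableSpace Ω] (P : Measure Ω) [IsProbabilityMeasure P]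
    (X : ℝ → Ω → ℝ) (hX : IsLevy P X)
    (f : ℝ → ℝ) (hf : Continuous f) (hfb : ∃ M : ℝ, ∀ x, |f x| ≤ M)
    (r : ℝ) (hr : 0 ≤ r)
    (ξ : ℕ → ℕ → Ω → ℝ)
    (hξ : ∀ n : ℕ, 1 ≤ n → IsExpSeq P (n : ℝ) (ξ n))
    (hind : ∀ n : ℕ, 1 ≤ n → IndepOfProcess P (ξ n) X)
    (T : ℝ) (hT : 0 ≤ T) (k : ℕ → ℕ)
    (hk : Tendsto (fun n : ℕ => (k n : ℝ) / n) atTop (nhds T)) :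
    ∀ x : ℝ,
      Tendsto (fun n : ℕ => |Vhat P X (ξ n) f r (k n) x - V P X (ξ n) f r n (k n) x|)
        atTop (nhds 0) :=
  statement6_general P X hX f hfb r hr ξ hξ T k hk
end

section
/- For every k ≥ 1: V_k(x) = max(K − e^x, 0) for all x ≤ x̄_k, and V_k(x) = e^{−r/n} E[ V_{k−1}(x + Y) ] for all x > x̄_k. -/
/-!
In the variable `s = e^x` every `V_k` is convex: the payoff `(K - s)⁺` is, a shift `x ↦ x + y`
is the rescaling `s ↦ e^y s`, and expectations and maxima preserve convexity. Hence the gap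
`c_k(x) - (K - e^x)` between the continuation value `c_k(x) = e^{-r/n} E[V_k(x + Y)]` and the
exercise value is convex in `s`. It is negative for small `s`, because `c_k ≤ e^{-r/n} K < K`,
and it vanishes at `s = e^{x̄_{k+1}}`; so it is `≤ 0` to the left of that zero and `≥ 0` to its
right, which says which term attains the maximum defining `V_{k+1}`.
-/

open MeasureTheory Set

/-- The recursively defined value functions for the Canadised American put:
`V_0(x) = (K − e^x)⁺` and `V_k(x) = max{(K − e^x)⁺, e^{−r/n} E[V_{k−1}(x + Y)]}`. -/
noncomputable def putV {Ω : Type*} [MeasurableSpace Ω] (P : Measure Ω) (Y : Ω → ℝ)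
    (K r : ℝ) (n : ℕ) : ℕ → ℝ → ℝ
  | 0 => fun x => max (K - Real.exp x) 0
  | k + 1 => fun x =>
      max (max (K - Real.exp x) 0)
        (Real.exp (-(r / n)) * ∫ ω, putV P Y K r n k (x + Y ω) ∂P)

lemma ConvexOn.comp_const_mul_Ioi {f : ℝ → ℝ} (hf : ConvexOn ℝ (Ioi 0) f) {c : ℝ} (hc : 0 < c) :
    ConvexOn ℝ (Ioi 0) fun s => f (c * s) :=
  ⟨convex_Ioi 0, fun x hx y hy a b ha hb hab => by
    simpa only [smul_eq_mul, mul_add, mul_left_comm c] using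
      hf.2 (mul_pos hc hx) (mul_pos hc hy) ha hb hab⟩

lemma ConvexOn.le_of_le_of_lt {f : ℝ → ℝ} {D : Set ℝ} (hf : ConvexOn ℝ D f) {a b s : ℝ}
    (ha : a ∈ D) (hs : s ∈ D) (hab : a < b) (hbs : b < s) (hfab : f a ≤ f b) : f b ≤ f s := by
  have hslope := hf.slope_mono_adjacent ha hs hab hbs
  have hleft : 0 ≤ (f b - f a) / (b - a) := div_nonneg (sub_nonneg.2 hfab) (sub_pos.2 hab).le
  have hright := (le_div_iff₀ (sub_pos.2 hbs)).1 (hleft.trans hslope)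
  linarith

lemma convexOn_integral {Ω E : Type*} [MeasurableSpace Ω] (μ : Measure Ω) [AddCommGroup E]
    [Module ℝ E] {D : Set E} {F : E → Ω → ℝ} (hD : Convex ℝ D)
    (hF : ∀ ω, ConvexOn ℝ D fun x => F x ω) (hint : ∀ x ∈ D, Integrable (F x) μ) :
    ConvexOn ℝ D fun x => ∫ ω, F x ω ∂μ := by
  refine ⟨hD, fun x hx y hy a b ha hb hab => ?_⟩
  have hax := (hint x hx).const_mul a
  have hby := (hint y hy).const_mul b
  calc ∫ ω, F (a • x + b • y) ω ∂μ ≤ ∫ ω, (a * F x ω + b * F y ω) ∂μ :=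
        integral_mono (hint _ (hD hx hy ha hb hab)) (hax.add hby)
          fun ω => (hF ω).2 hx hy ha hb hab
    _ = a • ∫ ω, F x ω ∂μ + b • ∫ ω, F y ω ∂μ := by
        rw [integral_add hax hby, integral_const_mul, integral_const_mul, smul_eq_mul,
          smul_eq_mul]

lemma single_crossing_of_convexOn_comp_log {g : ℝ → ℝ} {C K z : ℝ}
    (hg : ConvexOn ℝ (Ioi 0) fun s => g (Real.log s)) (hgC : ∀ x, g x ≤ C) (hC : C < K)
    (hz : g z = K - Real.exp z) (x : ℝ) :
    (x ≤ z → g x ≤ K - Real.exp x) ∧ (z < x → K - Real.exp x ≤ g x) := by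
  set φ : ℝ → ℝ := fun s => g (Real.log s) + s - K with hφ
  have hφconv : ConvexOn ℝ (Ioi 0) φ :=
    ((hg.add (convexOn_id (convex_Ioi 0))).sub (concaveOn_const K (convex_Ioi 0)))
  have hφexp : ∀ x, φ (Real.exp x) = g x - (K - Real.exp x) := fun x => by
    simp only [hφ, Real.log_exp]; ring
  have hsmall : ∀ s, s ≤ K - C → φ s ≤ 0 := fun s hs => by
    simp only [hφ]; linarith [hgC (Real.log s)]
  have hφz : φ (Real.exp z) = 0 := by rw [hφexp, hz, sub_self]
  refine ⟨fun hxz => ?_, fun hzx => ?_⟩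
  · rw [← sub_nonpos, ← hφexp]
    rcases le_or_gt (Real.exp x) (K - C) with hx | hx
    · exact hsmall _ hx
    · have hseg : Real.exp x ∈ segment ℝ (K - C) (Real.exp z) :=
        Icc_subset_segment ⟨hx.le, Real.exp_le_exp.2 hxz⟩
      calc φ (Real.exp x) ≤ max (φ (K - C)) (φ (Real.exp z)) :=
            hφconv.le_on_segment (sub_pos.2 hC) (Real.exp_pos z) hseg
        _ ≤ 0 := max_le (hsmall _ le_rfl) hφz.le
  · rw [← sub_nonneg, ← hφexp, ← hφz]
    set a := min (K - C) (Real.exp z / 2)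
    have ha : 0 < a := lt_min (sub_pos.2 hC) (half_pos (Real.exp_pos z))
    refine hφconv.le_of_le_of_lt ha (Real.exp_pos x) ?_ (Real.exp_lt_exp.2 hzx) ?_
    · exact (min_le_right _ _).trans_lt (half_lt_self (Real.exp_pos z))
    · exact hφz ▸ hsmall a (min_le_left _ _)

section PutValue

variable {Ω : Type*} [MeasurableSpace Ω]

lemma integrable_comp_add {P : Measure Ω} [IsFiniteMeasure P] {Y : Ω → ℝ} (hY : Measurable Y)
    {g : ℝ → ℝ} (hg : Measurable g) {C : ℝ} (hgC : ∀ x, ‖g x‖ ≤ C) (x : ℝ) :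
    Integrable (fun ω => g (x + Y ω)) P :=
  .of_bound (hg.comp (measurable_const.add hY)).aestronglyMeasurable C
    (.of_forall fun _ => hgC _)

lemma continuous_integral_comp_add {P : Measure Ω} [IsFiniteMeasure P] {Y : Ω → ℝ}
    (hY : Measurable Y) {g : ℝ → ℝ} (hg : Continuous g) {C : ℝ} (hgC : ∀ x, ‖g x‖ ≤ C) :
    Continuous fun x => ∫ ω, g (x + Y ω) ∂P :=
  continuous_of_dominated
    (fun _ => (hg.measurable.comp (measurable_const.add hY)).aestronglyMeasurable)
    (fun _ => .of_forall fun _ => hgC _) (integrable_const C)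
    (.of_forall fun _ => hg.comp (continuous_id.add continuous_const))

lemma integral_le_of_norm_le {P : Measure Ω} [IsProbabilityMeasure P] {f : Ω → ℝ} {C : ℝ}
    (hfC : ∀ ω, ‖f ω‖ ≤ C) : ∫ ω, f ω ∂P ≤ C := by
  simpa using (le_abs_self _).trans (norm_integral_le_of_norm_le_const (μ := P) (.of_forall hfC))

variable (P : Measure Ω) (Y : Ω → ℝ) (K r : ℝ) (n : ℕ)

noncomputable def contValue (k : ℕ) (x : ℝ) : ℝ :=
  Real.exp (-(r / n)) * ∫ ω, putV P Y K r n k (x + Y ω) ∂P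

lemma putV_succ (k : ℕ) (x : ℝ) :
    putV P Y K r n (k + 1) x = max (max (K - Real.exp x) 0) (contValue P Y K r n k x) :=
  rfl

lemma putV_nonneg (k : ℕ) (x : ℝ) : 0 ≤ putV P Y K r n k x := by
  cases k with
  | zero => exact le_max_right _ _
  | succ k => exact (le_max_right _ _).trans (le_max_left _ _)

lemma contValue_nonneg (k : ℕ) (x : ℝ) : 0 ≤ contValue P Y K r n k x :=
  mul_nonneg (Real.exp_pos _).le (integral_nonneg fun _ => putV_nonneg P Y K r n k _)

variable [IsProbabilityMeasure P]

lemma norm_putV_le (hK : 0 ≤ K) (hr : 0 ≤ r) (k : ℕ) (x : ℝ) : ‖putV P Y K r n k x‖ ≤ K := by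
  rw [Real.norm_of_nonneg (putV_nonneg P Y K r n k x)]
  induction k generalizing x with
  | zero => exact max_le (by linarith [Real.exp_pos x]) hK
  | succ k ih =>
    refine max_le (max_le (by linarith [Real.exp_pos x]) hK) ?_
    have hdisc : Real.exp (-(r / n)) ≤ 1 := Real.exp_le_one_iff.2 (neg_nonpos.2 (by positivity))
    have hint : ∫ ω, putV P Y K r n k (x + Y ω) ∂P ≤ K := integral_le_of_norm_le fun ω => by
      rw [Real.norm_of_nonneg (putV_nonneg P Y K r n k _)]; exact ih _
    calc contValue P Y K r n k x ≤ 1 * K :=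
          mul_le_mul hdisc hint (integral_nonneg fun _ => putV_nonneg P Y K r n k _) zero_le_one
      _ = K := one_mul K

lemma contValue_le (hK : 0 ≤ K) (hr : 0 ≤ r) (k : ℕ) (x : ℝ) :
    contValue P Y K r n k x ≤ Real.exp (-(r / n)) * K :=
  mul_le_mul_of_nonneg_left (integral_le_of_norm_le fun _ => norm_putV_le P Y K r n hK hr k _)
    (Real.exp_pos _).le

lemma continuous_putV (hK : 0 ≤ K) (hr : 0 ≤ r) (hY : Measurable Y) (k : ℕ) :
    Continuous (putV P Y K r n k) := by
  have hpayoff : Continuous fun x => max (K - Real.exp x) 0 :=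
    (continuous_const.sub Real.continuous_exp).max continuous_const
  induction k with
  | zero => exact hpayoff
  | succ k ih =>
    exact hpayoff.max (continuous_const.mul
      (continuous_integral_comp_add hY ih (norm_putV_le P Y K r n hK hr k)))

lemma convexOn_contValue_comp_log (hK : 0 ≤ K) (hr : 0 ≤ r) (hY : Measurable Y) (k : ℕ)
    (hk : ConvexOn ℝ (Ioi 0) fun s => putV P Y K r n k (Real.log s)) :
    ConvexOn ℝ (Ioi 0) fun s => contValue P Y K r n k (Real.log s) := by
  refine (convexOn_integral P (convex_Ioi 0) (fun ω => ?_) fun s _ => ?_).smul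
    (Real.exp_pos _).le
  · refine (hk.comp_const_mul_Ioi (Real.exp_pos (Y ω))).congr fun s hs => ?_
    simp only [Real.log_mul (Real.exp_pos _).ne' (ne_of_gt hs), Real.log_exp, add_comm]
  · exact integrable_comp_add hY (continuous_putV P Y K r n hK hr hY k).measurable
      (norm_putV_le P Y K r n hK hr k) _

lemma convexOn_putV_comp_log (hK : 0 ≤ K) (hr : 0 ≤ r) (hY : Measurable Y) (k : ℕ) :
    ConvexOn ℝ (Ioi 0) fun s => putV P Y K r n k (Real.log s) := by
  have hpayoff : ConvexOn ℝ (Ioi 0) fun s => max (K - Real.exp (Real.log s)) 0 :=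
    (((convexOn_const K (convex_Ioi 0)).sub (concaveOn_id (convex_Ioi 0))).sup
      (convexOn_const 0 (convex_Ioi 0))).congr fun s hs => by
        simp [Real.exp_log (show (0 : ℝ) < s from hs)]
  induction k with
  | zero => exact hpayoff
  | succ k ih => exact hpayoff.sup (convexOn_contValue_comp_log P Y K r n hK hr hY k ih)

end PutValue

theorem statement15_general {Ω : Type*} [MeasurableSpace Ω] (P : Measure Ω) [IsProbabilityMeasure P]
    (K r : ℝ) (hK : 0 < K) (hr : 0 < r) (n : ℕ) (hn : 1 ≤ n)
    (Y : Ω → ℝ) (hY : Measurable Y)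
    (xb : ℕ → ℝ)
    (hsol : ∀ k : ℕ,
      Real.exp (-(r / n)) * ∫ ω, putV P Y K r n k (xb (k + 1) + Y ω) ∂P
        = K - Real.exp (xb (k + 1))) :
    ∀ k : ℕ, ∀ x : ℝ,
      (x ≤ xb (k + 1) → putV P Y K r n (k + 1) x = max (K - Real.exp x) 0) ∧
        (xb (k + 1) < x →
          putV P Y K r n (k + 1) x
            = Real.exp (-(r / n)) * ∫ ω, putV P Y K r n k (x + Y ω) ∂P) := by
  intro k x
  have hdisc : Real.exp (-(r / n)) * K < K := by
    have hrate : 0 < r / n := div_pos hr (by exact_mod_cast hn)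
    exact mul_lt_of_lt_one_left hK (Real.exp_lt_one_iff.2 (neg_neg_iff_pos.2 hrate))
  obtain ⟨hleft, hright⟩ := single_crossing_of_convexOn_comp_log
    (convexOn_contValue_comp_log P Y K r n hK.le hr.le hY k
      (convexOn_putV_comp_log P Y K r n hK.le hr.le hY k))
    (contValue_le P Y K r n hK.le hr.le k) hdisc (hsol k) x
  refine ⟨fun hx => ?_, fun hx => ?_⟩
  · exact (putV_succ P Y K r n k x).trans (max_eq_left ((hleft hx).trans (le_max_left _ _)))
  · exact (putV_succ P Y K r n k x).trans
      (max_eq_right (max_le (hright hx) (contValue_nonneg P Y K r n k x)))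

/-- with `(x̄_k)` the strictly decreasing sequence with `x̄_0 = log K` whose
terms solve the boundary equations, for every `k ≥ 1`:
`V_k(x) = (K − e^x)⁺` for `x ≤ x̄_k`, and `V_k(x) = e^{−r/n} E[V_{k−1}(x + Y)]` for
`x > x̄_k`. -/
theorem statement15 {Ω : Type*} [MeasurableSpace Ω] (P : Measure Ω) [IsProbabilityMeasure P]
    (K r : ℝ) (hK : 0 < K) (hr : 0 < r) (n : ℕ) (hn : 1 ≤ n)
    (Y : Ω → ℝ) (hY : Measurable Y)
    (hYneg : ∀ y : ℝ, 0 < P {ω | Y ω < y})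
    (xb : ℕ → ℝ) (hanti : StrictAnti xb) (hxb0 : xb 0 = Real.log K)
    (hsol : ∀ k : ℕ,
      Real.exp (-(r / n)) * ∫ ω, putV P Y K r n k (xb (k + 1) + Y ω) ∂P
        = K - Real.exp (xb (k + 1)))
    (huniq : ∀ k : ℕ, ∀ z : ℝ, z < xb k →
      (Real.exp (-(r / n)) * ∫ ω, putV P Y K r n k (z + Y ω) ∂P = K - Real.exp z) →
      z = xb (k + 1)) :
    ∀ k : ℕ, ∀ x : ℝ,
      (x ≤ xb (k + 1) → putV P Y K r n (k + 1) x = max (K - Real.exp x) 0) ∧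
        (xb (k + 1) < x →
          putV P Y K r n (k + 1) x
            = Real.exp (-(r / n)) * ∫ ω, putV P Y K r n k (x + Y ω) ∂P) :=
  statement15_general P K r hK hr n hn Y hY xb hsol
end

section
/- The map s ↦ E[ max(K − s e^Y, 0) ] is convex on (0, ∞); moreover F(s) → (c − 1)K < 0 as s ↓ 0, F(K) > 0, and F has exactly one zero in the interval (0, K]. -/
open MeasureTheory Filter Set Topology

/-!
The integrand `s ↦ max (K - s z) 0` is convex and bounded by `K` for `s, z ≥ 0`, so its
expectation `g` is convex and, by dominated convergence, continuous on `[0, ∞)` with `g 0 = K`.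
Hence `F = c g - (K - s)` is convex and continuous on `(0, K]`, tends to `(c - 1) K < 0` at `0`,
and `F K = c g K > 0` because `K - K e^Y > 0` on `{Y < 0}`. A convex function that is negative near
`0` and vanishes at `u` is positive to the right of `u`, which gives uniqueness; the
intermediate value theorem gives existence.
-/

noncomputable def putValue {Ω : Type*} [MeasurableSpace Ω] (μ : Measure Ω) (Z : Ω → ℝ)
    (K s : ℝ) : ℝ :=
  ∫ ω, max (K - s * Z ω) 0 ∂μ

section PutValue

variable {Ω : Type*} [MeasurableSpace Ω] {μ : Measure Ω} {Z : Ω → ℝ} {K s : ℝ}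

lemma putValue_zero [IsProbabilityMeasure μ] (hK : 0 ≤ K) : putValue μ Z K 0 = K := by
  simp [putValue, hK]

lemma norm_put_le {z : ℝ} (hs : 0 ≤ s) (hz : 0 ≤ z) : ‖max (K - s * z) 0‖ ≤ max K 0 := by
  rw [Real.norm_of_nonneg (le_max_right _ _)]
  exact max_le_max_right 0 (sub_le_self K (mul_nonneg hs hz))

lemma convexOn_put (K z : ℝ) : ConvexOn ℝ univ (fun s : ℝ => max (K - s * z) 0) := by
  have haffine : ConvexOn ℝ univ (fun s : ℝ => K - s * z) :=
    ⟨convex_univ, fun x _ y _ a b _ _ hab => le_of_eq <| by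
      simp only [smul_eq_mul]
      linear_combination (-K) * hab⟩
  exact haffine.sup (convexOn_const 0 convex_univ)

lemma integrable_put [IsFiniteMeasure μ] (hZ : AEMeasurable Z μ) (hZ0 : ∀ ω, 0 ≤ Z ω)
    (hs : 0 ≤ s) : Integrable (fun ω => max (K - s * Z ω) 0) μ :=
  (integrable_const (max K 0)).mono' (by fun_prop)
    (Eventually.of_forall fun ω => norm_put_le hs (hZ0 ω))

variable [IsFiniteMeasure μ] (hZ : AEMeasurable Z μ) (hZ0 : ∀ ω, 0 ≤ Z ω)
include hZ hZ0

lemma convexOn_putValue : ConvexOn ℝ (Ici 0) (putValue μ Z K) :=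
  integral_convexOn_of_integrand_ae (convex_Ici 0)
    (Eventually.of_forall fun ω => (convexOn_put K (Z ω)).subset (subset_univ _) (convex_Ici 0))
    fun _ hs => integrable_put hZ hZ0 hs

lemma continuousOn_putValue : ContinuousOn (putValue μ Z K) (Ici 0) :=
  continuousOn_of_dominated (fun _ _ => by fun_prop)
    (fun _ hs => Eventually.of_forall fun ω => norm_put_le hs (hZ0 ω))
    (integrable_const (max K 0)) (Eventually.of_forall fun _ => by fun_prop)

lemma putValue_pos (hs : 0 ≤ s) (hpos : 0 < μ {ω | s * Z ω < K}) : 0 < putValue μ Z K s := by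
  rw [putValue, integral_pos_iff_support_of_nonneg (f := fun ω => max (K - s * Z ω) 0)
    (fun ω => le_max_right _ _) (integrable_put hZ hZ0 hs)]
  refine hpos.trans_le (measure_mono fun ω hω => ?_)
  exact (lt_max_of_lt_left (sub_pos.mpr hω)).ne'

end PutValue

lemma tendsto_putValue_nhdsGT_zero {Ω : Type*} [MeasurableSpace Ω] {μ : Measure Ω}
    [IsProbabilityMeasure μ] {Z : Ω → ℝ} {K : ℝ} (hZ : AEMeasurable Z μ) (hZ0 : ∀ ω, 0 ≤ Z ω)
    (hK : 0 ≤ K) : Tendsto (putValue μ Z K) (𝓝[>] 0) (𝓝 K) := by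
  simpa only [putValue_zero hK] using
    ((continuousOn_putValue (K := K) hZ hZ0 0 self_mem_Ici).mono Ioi_subset_Ici_self).tendsto

lemma ConvexOn.pos_of_apply_eq_zero {S : Set ℝ} {f : ℝ → ℝ} (hf : ConvexOn ℝ S f)
    {a u v : ℝ} (ha : a ∈ S) (hv : v ∈ S) (hau : a < u) (huv : u < v) (hfa : f a < 0)
    (hfu : f u = 0) : 0 < f v := by
  have hslope := hf.slope_mono_adjacent ha hv hau huv
  rw [hfu, zero_sub, sub_zero] at hslope
  have : 0 < -f a / (u - a) := div_pos (neg_pos.mpr hfa) (sub_pos.mpr hau)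
  exact (div_pos_iff_of_pos_right (sub_pos.mpr huv)).mp (this.trans_le hslope)

lemma existsUnique_zero_of_convexOn_Ioc {f : ℝ → ℝ} {b : ℝ} (hb0 : 0 < b)
    (hconv : ConvexOn ℝ (Ioc 0 b) f) (hcont : ContinuousOn f (Ioc 0 b)) (hfb : 0 ≤ f b)
    (hneg : ∀ᶠ s in 𝓝[>] 0, f s < 0) : ∃! s, s ∈ Ioc 0 b ∧ f s = 0 := by
  have hleft : ∀ t, 0 < t → ∃ a, a ∈ Ioo 0 t ∧ f a < 0 := fun t ht =>
    (Filter.Eventually.and (Ioo_mem_nhdsGT ht) hneg).exists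
  have hnot_lt : ∀ u ∈ Ioc 0 b, f u = 0 → ∀ v ∈ Ioc 0 b, f v = 0 → ¬u < v := by
    intro u hu hfu v hv hfv huv
    obtain ⟨a, ⟨ha0, hau⟩, hfa⟩ := hleft u hu.1
    exact (hconv.pos_of_apply_eq_zero ⟨ha0, hau.le.trans hu.2⟩ hv hau huv hfa hfu).ne' hfv
  obtain ⟨a, ⟨ha0, hab⟩, hfa⟩ := hleft b hb0
  obtain ⟨s, hs, hfs⟩ := intermediate_value_Icc hab.le
    (hcont.mono (Icc_subset_Ioc ha0 le_rfl)) ⟨hfa.le, hfb⟩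
  have hs' : s ∈ Ioc 0 b := ⟨ha0.trans_le hs.1, hs.2⟩
  exact ⟨s, ⟨hs', hfs⟩, fun t ⟨ht, hft⟩ =>
    le_antisymm (not_lt.1 (hnot_lt s hs' hfs t ht hft)) (not_lt.1 (hnot_lt t ht hft s hs' hfs))⟩

/-- let `K > 0`, `c ∈ (0,1)` and let `Y` be a random variable with
`ℙ(Y < 0) > 0`; set `F(s) = c·E[max(K − s e^Y, 0)] − max(K − s, 0)` for `s > 0`.
Then `s ↦ E[max(K − s e^Y, 0)]` is convex on `(0,∞)`; moreover `F(s) → (c−1)K < 0`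
as `s ↓ 0`, `F(K) > 0`, and `F` has exactly one zero in `(0, K]`. -/
theorem statement17 {Ω : Type*} [MeasurableSpace Ω] (P : Measure Ω) [IsProbabilityMeasure P]
    (K c : ℝ) (hK : 0 < K) (hc : c ∈ Set.Ioo (0 : ℝ) 1)
    (Y : Ω → ℝ) (hY : Measurable Y) (hYneg : 0 < P {ω | Y ω < 0})
    (F : ℝ → ℝ)
    (hF : ∀ s : ℝ, F s
      = c * (∫ ω, max (K - s * Real.exp (Y ω)) 0 ∂P) - max (K - s) 0) :
    ConvexOn ℝ (Set.Ioi 0) (fun s => ∫ ω, max (K - s * Real.exp (Y ω)) 0 ∂P) ∧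
      Tendsto F (nhdsWithin 0 (Set.Ioi 0)) (nhds ((c - 1) * K)) ∧
      (c - 1) * K < 0 ∧
      0 < F K ∧
      ∃! s : ℝ, s ∈ Set.Ioc 0 K ∧ F s = 0 := by
  obtain ⟨hc0, hc1⟩ := hc
  set Z : Ω → ℝ := fun ω => Real.exp (Y ω)
  have hZ : AEMeasurable Z P := hY.exp.aemeasurable
  have hZ0 : ∀ ω, 0 ≤ Z ω := fun ω => (Real.exp_pos _).le
  have hconv : ConvexOn ℝ (Ici 0) (putValue P Z K) := convexOn_putValue hZ hZ0
  have hcont : ContinuousOn (putValue P Z K) (Ici 0) := continuousOn_putValue hZ hZ0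
  have hIoc : Ioc 0 K ⊆ Ici 0 := Ioc_subset_Ioi_self.trans Ioi_subset_Ici_self
  have hF_Ioc : EqOn (fun s => c * putValue P Z K s + (s - K)) F (Ioc 0 K) := fun s hs => by
    simp only [hF, putValue, max_eq_left (sub_nonneg.2 hs.2)]
    ring
  have hlim : Tendsto F (𝓝[>] 0) (𝓝 ((c - 1) * K)) := by
    refine Tendsto.congr' (eventuallyEq_of_mem (Ioc_mem_nhdsGT hK) hF_Ioc) ?_
    rw [show (c - 1) * K = c * K + (0 - K) by ring]
    exact ((tendsto_putValue_nhdsGT_zero hZ hZ0 hK.le).const_mul c).add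
      ((tendsto_id.mono_left nhdsWithin_le_nhds).sub_const K)
  have hneg : (c - 1) * K < 0 := mul_neg_of_neg_of_pos (by linarith) hK
  have hFK : 0 < F K := by
    have hYneg' : 0 < P {ω | K * Z ω < K} := by
      simpa [Z, mul_lt_iff_lt_one_right hK] using hYneg
    rw [hF, sub_self, max_self, sub_zero]
    exact mul_pos hc0 (putValue_pos hZ hZ0 hK.le hYneg')
  refine ⟨hconv.subset Ioi_subset_Ici_self (convex_Ioi 0), hlim, hneg, hFK,
    existsUnique_zero_of_convexOn_Ioc hK ?_ ?_ hFK.le (hlim.eventually_lt_const hneg)⟩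
  · exact (((hconv.subset hIoc (convex_Ioc 0 K)).smul hc0.le).add
      ((convexOn_id (convex_Ioc 0 K)).sub (concaveOn_const K (convex_Ioc 0 K)))).congr hF_Ioc
  · exact (((hcont.mono hIoc).const_smul c).add (by fun_prop)).congr hF_Ioc.symm
end
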